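/- arXiv:2509.05823 — 3 statements merged into one kernel-verified Lean document; each statement's English description precedes it below -/
import Mathlib

section
/- (Tweedie's formula) Let μ ~ F be a random variable with compactly supported distribution F on ℝ, and Y | μ ~ N(μ, 1). Let m(y) = ∫ φ(y-θ) dF(θ) be the marginal density of Y. Then the posterior mean satisfies E[μ | Y=y] = y + (d/dy) log m(y) for every real y. -/
open MeasureTheory Real

/-- Standard normal density. -/
noncomputable def stdNormalPDF (x : ℝ) : ℝ := (Real.sqrt (2 * π))⁻¹ * Real.exp (-x ^ 2 / 2)

/-!
Since `φ' (u) = -u φ(u)`, the marginal `m(y) = ∫ φ(y - θ) dF(θ)` has derivative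
`m'(y) = ∫ (θ - y) φ(y - θ) dF(θ) = ∫ θ φ(y - θ) dF(θ) - y m(y)`; dividing by `m(y) > 0` gives
`(log m)'(y) = E[μ | Y = y] - y`. Differentiation under the integral sign is justified by the
boundedness of `φ` and of `u ↦ u φ(u)`.
-/

lemma stdNormalPDF_pos (x : ℝ) : 0 < stdNormalPDF x := by
  unfold stdNormalPDF
  positivity

@[fun_prop]
lemma continuous_stdNormalPDF : Continuous stdNormalPDF := by
  unfold stdNormalPDF
  fun_prop

lemma stdNormalPDF_le (x : ℝ) : stdNormalPDF x ≤ (√(2 * π))⁻¹ :=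
  mul_le_of_le_one_right (by positivity) (exp_le_one_iff.mpr (by nlinarith [sq_nonneg x]))

lemma abs_mul_exp_neg_sq_div_two_le_one (x : ℝ) : |x| * exp (-x ^ 2 / 2) ≤ 1 := by
  have habs : |x| ≤ exp (x ^ 2 / 2) := by
    nlinarith [add_one_le_exp (x ^ 2 / 2), sq_nonneg (|x| - 1), sq_abs x]
  calc |x| * exp (-x ^ 2 / 2) ≤ exp (x ^ 2 / 2) * exp (-x ^ 2 / 2) := by gcongr
    _ = 1 := by rw [← exp_add, neg_div, add_neg_cancel, exp_zero]

lemma abs_mul_stdNormalPDF_le (x : ℝ) : |x| * stdNormalPDF x ≤ (√(2 * π))⁻¹ := by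
  unfold stdNormalPDF
  rw [mul_left_comm]
  exact mul_le_of_le_one_right (by positivity) (abs_mul_exp_neg_sq_div_two_le_one x)

lemma hasDerivAt_stdNormalPDF (x : ℝ) : HasDerivAt stdNormalPDF (-x * stdNormalPDF x) x := by
  have hexp : HasDerivAt (fun t : ℝ => exp (-t ^ 2 / 2)) (exp (-x ^ 2 / 2) * (-x)) x :=
    (((hasDerivAt_pow 2 x).neg.div_const 2).congr_deriv (by push_cast; ring)).exp
  exact (hexp.const_mul (√(2 * π))⁻¹).congr_deriv (by unfold stdNormalPDF; ring)

section Marginal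

variable (F : Measure ℝ) [IsFiniteMeasure F]

lemma integrable_stdNormalPDF_sub (x : ℝ) : Integrable (fun θ => stdNormalPDF (x - θ)) F := by
  refine .of_bound (by fun_prop) (√(2 * π))⁻¹ (.of_forall fun θ => ?_)
  rw [norm_of_nonneg (stdNormalPDF_pos _).le]
  exact stdNormalPDF_le _

lemma integral_stdNormalPDF_sub_pos [NeZero F] (x : ℝ) : 0 < ∫ θ, stdNormalPDF (x - θ) ∂F := by
  have hsupp : Function.support (fun θ => stdNormalPDF (x - θ)) = Set.univ :=
    Set.eq_univ_of_forall fun θ => (stdNormalPDF_pos _).ne'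
  rw [integral_pos_iff_support_of_nonneg (fun θ => (stdNormalPDF_pos _).le)
    (integrable_stdNormalPDF_sub F x), hsupp, Measure.measure_univ_pos]
  exact NeZero.ne F

lemma hasDerivAt_integral_stdNormalPDF_sub (x : ℝ) :
    Integrable (fun θ => (θ - x) * stdNormalPDF (x - θ)) F ∧
      HasDerivAt (fun x => ∫ θ, stdNormalPDF (x - θ) ∂F)
        (∫ θ, (θ - x) * stdNormalPDF (x - θ) ∂F) x := by
  refine hasDerivAt_integral_of_dominated_loc_of_deriv_le
    (F' := fun x θ => (θ - x) * stdNormalPDF (x - θ)) (bound := fun _ => (√(2 * π))⁻¹)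
    Filter.univ_mem (.of_forall fun x => (integrable_stdNormalPDF_sub F x).1)
    (integrable_stdNormalPDF_sub F x) (by fun_prop) (.of_forall fun θ t _ => ?_)
    (integrable_const _) (.of_forall fun θ t _ => ?_)
  · rw [norm_mul, norm_of_nonneg (stdNormalPDF_pos _).le, norm_eq_abs, abs_sub_comm]
    exact abs_mul_stdNormalPDF_le _
  · have h := (hasDerivAt_stdNormalPDF (t - θ)).comp t ((hasDerivAt_id t).sub_const θ)
    rwa [mul_one, neg_sub] at h

lemma integral_sub_mul_stdNormalPDF_sub (x : ℝ) :
    ∫ θ, (θ - x) * stdNormalPDF (x - θ) ∂F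
      = (∫ θ, θ * stdNormalPDF (x - θ) ∂F) - x * ∫ θ, stdNormalPDF (x - θ) ∂F := by
  have hint := integrable_stdNormalPDF_sub F x
  have hmul : Integrable (fun θ => θ * stdNormalPDF (x - θ)) F :=
    ((hasDerivAt_integral_stdNormalPDF_sub F x).1.add (hint.const_mul x)).congr
      (.of_forall fun θ => by simp only [Pi.add_apply]; ring)
  rw [← integral_const_mul, ← integral_sub hmul (hint.const_mul x)]
  simp only [sub_mul]

end Marginal

theorem tweedie_formula_general (F : Measure ℝ) [IsProbabilityMeasure F] (y : ℝ) :
    (∫ θ, θ * stdNormalPDF (y - θ) ∂F) / (∫ θ, stdNormalPDF (y - θ) ∂F)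
      = y + deriv (fun x => Real.log (∫ θ, stdNormalPDF (x - θ) ∂F)) y := by
  have hm := integral_stdNormalPDF_sub_pos F y
  rw [((hasDerivAt_integral_stdNormalPDF_sub F y).2.log hm.ne').deriv,
    integral_sub_mul_stdNormalPDF_sub]
  field_simp
  ring

/-- Tweedie's formula: for a compactly supported prior `F` and `Y | μ ~ N(μ,1)`,
the posterior mean is `E[μ | Y = y] = y + (log m)'(y)`. -/
theorem tweedie_formula (F : Measure ℝ) [IsProbabilityMeasure F]
    (B : ℝ) (hsupp : F (Set.Icc (-B) B)ᶜ = 0) (y : ℝ) :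
    (∫ θ, θ * stdNormalPDF (y - θ) ∂F) / (∫ θ, stdNormalPDF (y - θ) ∂F)
      = y + deriv (fun x => Real.log (∫ θ, stdNormalPDF (x - θ) ∂F)) y :=
  tweedie_formula_general F y
end

section
/- (Cramér's decomposition theorem, as used) Let μ and ε be independent real random variables with ε ~ N(0,1) and Y = μ + ε. If Y is Gaussian, then μ is Gaussian (possibly degenerate, i.e., a point mass). -/
/-!
Because one summand is known to be Gaussian, no factorisation theory is needed: the
characteristic function of `N(m, u)` never vanishes, so dividing it out of that of
`N(a, v)` gives `φ_X(t) = exp(i t (a - m) - (v - u) t² / 2)`. Since `|φ_X| ≤ 1`, this forces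
`u ≤ v`, and then `φ_X` is the characteristic function of `N(a - m, v - u)`.
-/

open MeasureTheory ProbabilityTheory Complex

namespace ProbabilityTheory

variable {μ : Measure ℝ} [IsProbabilityMeasure μ] {m a : ℝ} {u v : NNReal}

lemma charFun_eq_of_conv_gaussianReal (h : μ ∗ gaussianReal m u = gaussianReal a v) (t : ℝ) :
    charFun μ t = cexp (t * (a - m) * I - ((v : ℝ) - u) * t ^ 2 / 2) := by
  have hprod :
      charFun μ t * cexp (t * m * I - u * t ^ 2 / 2) = cexp (t * a * I - v * t ^ 2 / 2) := by
    rw [← charFun_gaussianReal, ← charFun_gaussianReal, ← charFun_conv, h]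
  rw [← eq_div_iff (Complex.exp_ne_zero _), ← Complex.exp_sub] at hprod
  rw [hprod]
  ring_nf

lemma le_of_conv_gaussianReal (h : μ ∗ gaussianReal m u = gaussianReal a v) : u ≤ v := by
  have hnorm : Real.exp (((u : ℝ) - v) / 2) ≤ 1 := by
    have := norm_charFun_le_one (μ := μ) 1
    rw [charFun_eq_of_conv_gaussianReal h, Complex.norm_exp] at this
    convert this using 2
    simp only [ofReal_one, one_mul, one_pow, mul_one, sub_re, mul_re, ofReal_re, I_re, I_im,
      sub_im, ofReal_im, div_ofNat_re]
    ring
  have := Real.exp_le_one_iff.mp hnorm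
  exact_mod_cast (by linarith : (u : ℝ) ≤ v)

theorem eq_gaussianReal_of_conv_gaussianReal (h : μ ∗ gaussianReal m u = gaussianReal a v) :
    μ = gaussianReal (a - m) (v - u) := by
  refine Measure.ext_of_charFun (funext fun t => ?_)
  rw [charFun_eq_of_conv_gaussianReal h, charFun_gaussianReal,
    NNReal.coe_sub (le_of_conv_gaussianReal h)]
  push_cast
  ring_nf

end ProbabilityTheory

/-- (Cramér's decomposition, as used) If `μ` and `ε` are independent, `ε ~ N(0,1)`, and
`Y = μ + ε` is Gaussian, then `μ` is Gaussian (possibly degenerate). -/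
theorem cramer_decomposition
    {Ω : Type*} [MeasurableSpace Ω] (P : Measure Ω) [IsProbabilityMeasure P]
    (X ε : Ω → ℝ) (hX : Measurable X) (hε : Measurable ε)
    (hindep : IndepFun X ε P)
    (hεlaw : Measure.map ε P = gaussianReal 0 1)
    (hY : ∃ (a : ℝ) (v : NNReal), Measure.map (fun ω => X ω + ε ω) P = gaussianReal a v) :
    ∃ (b : ℝ) (w : NNReal), Measure.map X P = gaussianReal b w := by
  obtain ⟨a, v, hYlaw⟩ := hY
  have : IsProbabilityMeasure (Measure.map X P) := Measure.isProbabilityMeasure_map hX.aemeasurable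
  have hconv : Measure.map X P ∗ gaussianReal 0 1 = gaussianReal a v := by
    rw [← hεlaw, ← hindep.map_add_eq_map_conv_map₀ hX.aemeasurable hε.aemeasurable]
    exact hYlaw
  exact ⟨a - 0, v - 1, eq_gaussianReal_of_conv_gaussianReal hconv⟩
end

section
/- (Robbins' Poisson empirical Bayes formula) Let λ ~ G be a positive random variable with E[λ^{k+1}] < ∞ for relevant k, and Y | λ ~ Poisson(λ), with marginal pmf m(y) = ∫ e^{−λ} λ^y / y! dG(λ). Then the posterior mean satisfies E[λ | Y = y] = (y+1) · m(y+1) / m(y) for every nonnegative integer y with m(y) > 0. -/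
open MeasureTheory Real

/-- (Robbins' Poisson empirical Bayes formula) With `λ ~ G` on `(0,∞)` having finite
moments and `Y | λ ~ Poisson(λ)`, the posterior mean satisfies
`E[λ | Y = y] = (y+1) m(y+1)/m(y)` whenever `m(y) > 0`. -/
theorem robbins_poisson_formula (G : Measure ℝ) [IsProbabilityMeasure G]
    (hsupp : G (Set.Iic (0 : ℝ)) = 0)
    (hmom : ∀ k : ℕ, Integrable (fun l : ℝ => l ^ k) G)
    (m : ℕ → ℝ)
    (hm : ∀ y : ℕ, m y = ∫ l, Real.exp (-l) * l ^ y / (Nat.factorial y) ∂G)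
    (y : ℕ) (hpos : 0 < m y) :
    (∫ l, l * (Real.exp (-l) * l ^ y / (Nat.factorial y)) ∂G) / m y
      = (y + 1 : ℝ) * m (y + 1) / m y := by
  congr 1
  have hfac : ((Nat.factorial (y + 1) : ℝ)) = (y + 1) * Nat.factorial y := by
    push_cast [Nat.factorial_succ]; ring
  have hpt : ∀ l : ℝ, l * (Real.exp (-l) * l ^ y / (Nat.factorial y))
      = (y + 1 : ℝ) * (Real.exp (-l) * l ^ (y + 1) / (Nat.factorial (y + 1))) := by
    intro l
    have h0 : (Nat.factorial y : ℝ) ≠ 0 := Nat.cast_ne_zero.mpr (Nat.factorial_ne_zero y)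
    have h1 : ((y : ℝ) + 1) ≠ 0 := by positivity
    rw [hfac]
    field_simp
    ring
  simp_rw [hpt]
  rw [MeasureTheory.integral_const_mul, hm]
end
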